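/- Let 1 → ⟨z⟩ → Γ̃ → Γ → 1 be a central extension with ⟨z⟩ ≅ ℤ, and suppose some power z^m lies in the derived subgroup Δ̃ of Γ̃ modulo [Δ̃,Γ̃] (i.e., the image of z in the abelianization of Γ̃ has finite order m ≥ 1). Let N = Γ/[Δ,Γ] and Ñ = Γ̃/[Δ̃,Γ̃] be the maximal two-step nilpotent quotients, where Δ, Δ̃ are derived subgroups. Then Ñ/⟨ẑ⟩ ≅ N, where ẑ is the image of z in Ñ, and the free ranks of the abelian groups Δ̃/[Δ̃,Γ̃] and Δ/[Δ,Γ] differ by ε ∈ {0,1}, with ε = 1 if and only if ẑ has infinite order in Ñ. -/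

import Mathlib

/-!
Write `Ñ = Γ̃/[Δ̃,Γ̃]`, `N = Γ/[Δ,Γ]` and `ẑ` for the image of `z` in `Ñ`. The map `Q : Ñ → N`
induced by `π` is onto, with kernel the image `⟨ẑ⟩` of `ker π = ⟨z⟩`; this gives `Ñ/⟨ẑ⟩ ≅ N`.
`Q` also maps `Ñ'` onto `N'`, with kernel `Ñ' ∩ ⟨ẑ⟩`. Both commutator subgroups are central, and
`Ñ'` is generated by the commutators of generators of `Ñ`, hence finitely generated, so additivity
of the free rank gives `rk Ñ' = rk N' + rk (Ñ' ∩ ⟨ẑ⟩)`. Finally `ẑ^m ∈ Ñ'` because `z^m ∈ Δ̃`, so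
`Ñ' ∩ ⟨ẑ⟩` is finite if `ẑ` has finite order, and a nontrivial subgroup of `⟨ẑ⟩ ≅ ℤ` otherwise.
-/

/-- A (necessarily virtually abelian) group `A` has free rank `r` if
`A ≅ ℤ^r × T` for a finite (abelian) group `T`. -/
def HasFreeRank (A : Type*) [Group A] (r : ℕ) : Prop :=
  ∃ (T : Type) (_ : CommGroup T) (_ : Fintype T),
    Nonempty (A ≃* (Multiplicative (Fin r → ℤ) × T))

open scoped IsMulCommutative DirectSum commutatorElement
open Subgroup

noncomputable def freeRank (A : Type*) [CommGroup A] : ℕ := Module.finrank ℤ (Additive A)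

section FreeRank

variable {A B : Type*} [CommGroup A] [CommGroup B]

lemma freeRank_eq_zero_of_finite [Finite A] : freeRank A = 0 :=
  (isAddTorsion_iff_isTorsion_int.mp isAddTorsion_of_finite).finrank_eq_zero

lemma freeRank_multiplicative_fin_fun (n : ℕ) : freeRank (Multiplicative (Fin n → ℤ)) = n :=
  Module.finrank_fin_fun ℤ

lemma freeRank_eq_add_freeRank_ker [Group.FG A] (f : A →* B) (hf : Function.Surjective f) :
    freeRank A = freeRank B + freeRank f.ker := by
  have : Module.Finite ℤ (Additive A) := Module.Finite.iff_addGroup_fg.mpr inferInstance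
  let φ := f.toAdditive.toIntLinearMap
  rw [freeRank, ← (LinearMap.ker φ).finrank_quotient_add_finrank,
    (φ.quotKerEquivOfSurjective hf).finrank_eq]
  rfl

lemma freeRank_eq_one_of_injective [Nontrivial A] (f : A →* Multiplicative ℤ)
    (hf : Function.Injective f) : freeRank A = 1 := by
  let φ : Additive A →ₗ[ℤ] ℤ := f.toAdditiveLeft.toIntLinearMap
  have hφ : Function.Injective φ := hf
  have : Module.Finite ℤ (Additive A) := Module.Finite.of_injective φ hφ
  have hle : freeRank A ≤ 1 :=
    (LinearMap.finrank_le_finrank_of_injective hφ).trans_eq (Module.finrank_self ℤ)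
  have : Module.IsTorsionFree ℤ (Additive A) := hφ.moduleIsTorsionFree φ (map_zsmul φ)
  have hpos : 0 < freeRank A := Module.finrank_pos
  omega

lemma hasFreeRank_freeRank [Group.FG A] : HasFreeRank A (freeRank A) := by
  obtain ⟨n, ι, _, p, hp, e, ⟨F⟩⟩ := AddCommGroup.equiv_free_prod_directSum_zmod (Additive A)
  have : ∀ i, NeZero (p i ^ e i) := fun i => ⟨pow_ne_zero _ (hp i).ne_zero⟩
  let T := Multiplicative (⨁ i, ZMod (p i ^ e i))
  have : Finite T := Finite.of_equiv _ (DirectSum.addEquivProd _).symm.toEquiv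
  let E : A ≃* Multiplicative (Fin n → ℤ) × T :=
    (AddEquiv.toMultiplicativeLeft (F.trans
      ((Finsupp.linearEquivFunOnFinite ℤ ℤ (Fin n)).toAddEquiv.prodCongr (.refl _)))).trans
      (MulEquiv.prodMultiplicative _ _)
  let f : A →* Multiplicative (Fin n → ℤ) := (MonoidHom.fst _ _).comp E.toMonoidHom
  have hf : Function.Surjective f := Prod.fst_surjective.comp E.surjective
  have : Finite f.ker := Finite.of_injective (fun x => (E x).2) fun x y hxy =>
    Subtype.ext (E.injective (Prod.ext (x.2.trans y.2.symm) hxy))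
  have hn : freeRank A = n := by
    rw [freeRank_eq_add_freeRank_ker f hf, freeRank_eq_zero_of_finite (A := f.ker),
      freeRank_multiplicative_fin_fun, add_zero]
  exact hn ▸ ⟨T, inferInstance, Fintype.ofFinite T, ⟨E⟩⟩

end FreeRank

section Commutator

variable {G H : Type*} [Group G] [Group H]

lemma normal_of_le_center {K : Subgroup G} (h : K ≤ center G) : K.Normal :=
  ⟨fun n hn g => by rwa [mem_center_iff.mp (h hn) g, mul_inv_cancel_right]⟩

lemma isMulCommutative_of_le_center {K : Subgroup G} (h : K ≤ center G) : IsMulCommutative K :=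
  le_centralizer_iff_isMulCommutative.mp (h.trans (center_le_centralizer (K : Set G)))

lemma normalClosure_singleton_eq_zpowers {g : G} (h : (zpowers g).Normal) :
    normalClosure {g} = zpowers g :=
  le_antisymm (normalClosure_le_normal (Set.singleton_subset_iff.mpr (mem_zpowers g)))
    (zpowers_le.mpr (subset_normalClosure rfl))

lemma isMulCommutative_of_closure_eq_top {S : Set G} (hS : closure S = ⊤)
    (hcomm : ∀ x ∈ S, ∀ y ∈ S, x * y = y * x) : IsMulCommutative G := by
  rw [← center_eq_top_iff, eq_top_iff, ← hS, closure_le, ← centralizer_univ, ← coe_top, ← hS,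
    centralizer_closure]
  exact fun x hx => mem_centralizer_iff.mpr fun y hy => hcomm y hy x hx

lemma fg_commutator_of_le_center [Group.FG G] (h : commutator G ≤ center G) :
    (commutator G).FG := by
  obtain ⟨S, hS, hSfin⟩ := Group.fg_iff.mp ‹_›
  let C := closure (Set.image2 (fun a b : G => ⁅a, b⁆) S S)
  have hC : C ≤ commutator G := closure_le _ |>.mpr <| by
    rintro _ ⟨a, -, b, -, rfl⟩
    exact commutator_mem_commutator (mem_top a) (mem_top b)
  have := normal_of_le_center (hC.trans h)
  have : IsMulCommutative (G ⧸ C) := by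
    refine isMulCommutative_of_closure_eq_top (S := QuotientGroup.mk' C '' S) ?_ ?_
    · rw [← MonoidHom.map_closure, hS, ← MonoidHom.range_eq_map, MonoidHom.range_eq_top]
      exact QuotientGroup.mk'_surjective C
    · rintro _ ⟨a, ha, rfl⟩ _ ⟨b, hb, rfl⟩
      rw [← commutatorElement_eq_one_iff_mul_comm, ← map_commutatorElement,
        QuotientGroup.mk'_apply, QuotientGroup.eq_one_iff]
      exact subset_closure (Set.mem_image2_of_mem ha hb)
  have hle : commutator G ≤ C := by
    simpa using Abelianization.commutator_subset_ker (QuotientGroup.mk' C)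
  exact le_antisymm hle hC ▸ (fg_iff _).mpr ⟨_, rfl, hSfin.image2 _ hSfin⟩

lemma map_commutator_of_surjective {f : G →* H} (hf : Function.Surjective f) :
    (commutator G).map f = commutator H := by
  rw [commutator_def, commutator_def, map_commutator, map_top_of_surjective f hf]

lemma map_commutator_commutator_top_le (f : G →* H) :
    ⁅commutator G, (⊤ : Subgroup G)⁆.map f ≤ ⁅commutator H, (⊤ : Subgroup H)⁆ :=
  (map_lowerCentralSeries ⊤ f 2).trans_le (lowerCentralSeries_mono 2 le_top)

lemma map_commutator_commutator_top_of_surjective {f : G →* H} (hf : Function.Surjective f) :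
    ⁅commutator G, (⊤ : Subgroup G)⁆.map f = ⁅commutator H, (⊤ : Subgroup H)⁆ := by
  rw [map_commutator, map_commutator_of_surjective hf, map_top_of_surjective f hf]

lemma commutator_le_center_quotient_commutator_top :
    commutator (G ⧸ ⁅commutator G, (⊤ : Subgroup G)⁆) ≤ center _ := by
  rw [← commutator_top_right_eq_bot_iff_le_center,
    ← map_commutator_commutator_top_of_surjective (QuotientGroup.mk'_surjective _),
    Subgroup.map_eq_bot_iff, QuotientGroup.ker_mk']

instance : IsMulCommutative (commutator (G ⧸ ⁅commutator G, (⊤ : Subgroup G)⁆)) :=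
  isMulCommutative_of_le_center commutator_le_center_quotient_commutator_top

instance [Group.FG G] : Group.FG (commutator (G ⧸ ⁅commutator G, (⊤ : Subgroup G)⁆)) :=
  (Group.fg_iff_subgroup_fg _).mpr
    (fg_commutator_of_le_center commutator_le_center_quotient_commutator_top)

end Commutator

section TwoStepQuotient

variable {G H : Type*} [Group G] [Group H]

def twoStepQuotientMap (f : G →* H) :
    G ⧸ ⁅commutator G, (⊤ : Subgroup G)⁆ →* H ⧸ ⁅commutator H, (⊤ : Subgroup H)⁆ :=
  QuotientGroup.map _ _ f (map_le_iff_le_comap.mp (map_commutator_commutator_top_le f))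

lemma twoStepQuotientMap_surjective {f : G →* H} (hf : Function.Surjective f) :
    Function.Surjective (twoStepQuotientMap f) :=
  QuotientGroup.map_surjective_of_surjective _ _ _ ((QuotientGroup.mk'_surjective _).comp hf) _

lemma ker_twoStepQuotientMap {f : G →* H} (hf : Function.Surjective f) :
    (twoStepQuotientMap f).ker = f.ker.map (QuotientGroup.mk' _) := by
  rw [twoStepQuotientMap, QuotientGroup.ker_map, ← map_commutator_commutator_top_of_surjective hf,
    comap_map_eq, Subgroup.map_sup, (Subgroup.map_eq_bot_iff _).mpr (QuotientGroup.ker_mk' _).ge,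
    bot_sup_eq]

end TwoStepQuotient

lemma freeRank_commutator_eq_add_freeRank_ker {M N : Type*} [Group M] [Group N]
    [IsMulCommutative (commutator M)] [IsMulCommutative (commutator N)] [Group.FG (commutator M)]
    {Q : M →* N} (hQ : Function.Surjective Q) :
    freeRank (commutator M) =
      freeRank (commutator N) + freeRank (Q.ker.subgroupOf (commutator M)) := by
  let e := MulEquiv.subgroupCongr (map_commutator_of_surjective hQ)
  have := freeRank_eq_add_freeRank_ker
    ((e : map Q (commutator M) →* commutator N).comp (Q.subgroupMap _))
    (e.surjective.comp (Q.subgroupMap_surjective _))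
  rwa [MonoidHom.ker_mulEquiv_comp, Subgroup.ker_subgroupMap] at this

section ZPowers

variable {G : Type*} [Group G] {A : Subgroup G} {g : G}

lemma freeRank_zpowers_subgroupOf_eq_zero (hg : IsOfFinOrder g) :
    freeRank ((zpowers g).subgroupOf A) = 0 :=
  have : Finite (zpowers g) := hg.finite_zpowers.to_subtype
  have : Finite ((zpowers g).subgroupOf A) :=
    Finite.of_injective (fun x => (⟨x, x.2⟩ : zpowers g)) fun _ _ h =>
      Subtype.ext (Subtype.ext (Subtype.ext_iff.mp h :))
  freeRank_eq_zero_of_finite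

lemma freeRank_zpowers_subgroupOf_eq_one (hg : ¬IsOfFinOrder g) {m : ℕ} (hm : m ≠ 0)
    (hgm : g ^ m ∈ A) : freeRank ((zpowers g).subgroupOf A) = 1 := by
  have hinj : Function.Injective (zpowersHom G g) :=
    (injective_zpow_iff_not_isOfFinOrder.mpr hg).comp Multiplicative.toAdd.injective
  let toInt : zpowers g ≃* Multiplicative ℤ := (MonoidHom.ofInjective hinj).symm
  let incl : (zpowers g).subgroupOf A →* zpowers g :=
    (A.subtype.comp (Subgroup.subtype _)).codRestrict _ fun x => x.2
  have hincl : Function.Injective incl := fun _ _ h =>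
    Subtype.ext (Subtype.ext (Subtype.ext_iff.mp h :))
  have : Nontrivial ((zpowers g).subgroupOf A) :=
    nontrivial_of_ne ⟨⟨g ^ m, hgm⟩, npow_mem_zpowers g m⟩ 1 fun h => hg <|
      isOfFinOrder_iff_pow_eq_one.mpr ⟨m, Nat.pos_of_ne_zero hm, congrArg (fun x => (x.1 : G)) h⟩
  exact freeRank_eq_one_of_injective (toInt.toMonoidHom.comp incl) (toInt.injective.comp hincl)

end ZPowers

theorem rank_jump_of_central_extension_general (Γt Γ : Type*) [Group Γt] [Group Γ]
    [Group.FG Γt] [Group.FG Γ]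
    (π : Γt →* Γ) (hπ : Function.Surjective π)
    (z : Γt)
    (hker : π.ker = Subgroup.zpowers z)
    (m : ℕ) (hm : 1 ≤ m) (hzm : orderOf (Abelianization.of z) = m) :
    Nonempty
      (((Γt ⧸ ⁅commutator Γt, (⊤ : Subgroup Γt)⁆) ⧸
          Subgroup.normalClosure
            {(QuotientGroup.mk' ⁅commutator Γt, (⊤ : Subgroup Γt)⁆) z}) ≃*
        (Γ ⧸ ⁅commutator Γ, (⊤ : Subgroup Γ)⁆)) ∧
    ∃ r ε : ℕ, ε ≤ 1 ∧
      HasFreeRank ↥(commutator (Γ ⧸ ⁅commutator Γ, (⊤ : Subgroup Γ)⁆)) r ∧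
      HasFreeRank ↥(commutator (Γt ⧸ ⁅commutator Γt, (⊤ : Subgroup Γt)⁆)) (r + ε) ∧
      (ε = 1 ↔
        ¬ IsOfFinOrder ((QuotientGroup.mk' ⁅commutator Γt, (⊤ : Subgroup Γt)⁆) z)) := by
  set mk := QuotientGroup.mk' ⁅commutator Γt, (⊤ : Subgroup Γt)⁆
  let Q := twoStepQuotientMap π
  have hQ : Function.Surjective Q := twoStepQuotientMap_surjective hπ
  have hkerQ : Q.ker = zpowers (mk z) := by
    rw [ker_twoStepQuotientMap hπ, hker, MonoidHom.map_zpowers]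
  have hpow : mk z ^ m ∈ commutator _ := by
    have : z ^ m ∈ commutator Γt :=
      (QuotientGroup.eq_one_iff _).mp <| show Abelianization.of (z ^ m) = 1 by
        rw [map_pow, ← hzm, pow_orderOf_eq_one]
    rw [← map_pow, ← map_commutator_of_surjective (QuotientGroup.mk'_surjective _)]
    exact mem_map_of_mem mk this
  have hrank := freeRank_commutator_eq_add_freeRank_ker hQ
  rw [hkerQ] at hrank
  have hε : freeRank ((zpowers (mk z)).subgroupOf (commutator _)) ≤ 1 ∧
      (freeRank ((zpowers (mk z)).subgroupOf (commutator _)) = 1 ↔ ¬IsOfFinOrder (mk z)) := by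
    by_cases hfin : IsOfFinOrder (mk z)
    · simp [freeRank_zpowers_subgroupOf_eq_zero hfin, hfin]
    · simp [freeRank_zpowers_subgroupOf_eq_one hfin (by omega) hpow, hfin]
  have hnc : normalClosure {mk z} = Q.ker := by
    rw [hkerQ]
    exact normalClosure_singleton_eq_zpowers (hkerQ ▸ Q.normal_ker)
  exact ⟨⟨(QuotientGroup.quotientMulEquivOfEq hnc).trans
    (QuotientGroup.quotientKerEquivOfSurjective Q hQ)⟩, _, _, hε.1, hasFreeRank_freeRank,
    hrank ▸ hasFreeRank_freeRank, hε.2⟩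

/-- Let `1 → ⟨z⟩ → Γ̃ → Γ → 1` be a central extension of finitely generated groups
with `⟨z⟩ ≅ ℤ`, and suppose the image of `z` in the abelianization of `Γ̃` has
finite order `m ≥ 1`.  Let `Ñ = Γ̃/[Δ̃,Γ̃]` and `N = Γ/[Δ,Γ]` be the maximal
two-step nilpotent quotients (with derived subgroups `Δ̃`, `Δ`), and let `ẑ` be
the image of `z` in `Ñ`.  Then `Ñ/⟨ẑ⟩ ≅ N`, and the free ranks of the abelian
groups `Δ̃/[Δ̃,Γ̃]` and `Δ/[Δ,Γ]` (realized as the commutator subgroups of `Ñ`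
and `N`) differ by `ε ∈ {0,1}`, with `ε = 1` iff `ẑ` has infinite order in `Ñ`. -/
theorem rank_jump_of_central_extension (Γt Γ : Type*) [Group Γt] [Group Γ]
    [Group.FG Γt] [Group.FG Γ]
    (π : Γt →* Γ) (hπ : Function.Surjective π)
    (z : Γt) (hz : z ∈ Subgroup.center Γt) (hzinf : ¬ IsOfFinOrder z)
    (hker : π.ker = Subgroup.zpowers z)
    (m : ℕ) (hm : 1 ≤ m) (hzm : orderOf (Abelianization.of z) = m) :
    Nonempty
      (((Γt ⧸ ⁅commutator Γt, (⊤ : Subgroup Γt)⁆) ⧸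
          Subgroup.normalClosure
            {(QuotientGroup.mk' ⁅commutator Γt, (⊤ : Subgroup Γt)⁆) z}) ≃*
        (Γ ⧸ ⁅commutator Γ, (⊤ : Subgroup Γ)⁆)) ∧
    ∃ r ε : ℕ, ε ≤ 1 ∧
      HasFreeRank ↥(commutator (Γ ⧸ ⁅commutator Γ, (⊤ : Subgroup Γ)⁆)) r ∧
      HasFreeRank ↥(commutator (Γt ⧸ ⁅commutator Γt, (⊤ : Subgroup Γt)⁆)) (r + ε) ∧
      (ε = 1 ↔
        ¬ IsOfFinOrder ((QuotientGroup.mk' ⁅commutator Γt, (⊤ : Subgroup Γt)⁆) z)) :=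
  rank_jump_of_central_extension_general Γt Γ π hπ z hker m hm hzm
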